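/- Let V be a commutative unital quantale, F : Type u ⥤ Type u a functor, and E, E' lax extensions of F to V-Rel. Suppose that for every V-category (X,a), E a 𝔵 𝔶 ≤ E' a 𝔵 𝔶 for all 𝔵,𝔶 ∈ F.obj X (i.e. the induced liftings satisfy I(E) ≤ I(E')). Then E r 𝔵 𝔶 ≤ E' r 𝔵 𝔶 for every V-relation r : X → Y → V and all 𝔵 ∈ F.obj X, 𝔶 ∈ F.obj Y. (The assignment of induced liftings to lax extensions is order-reflecting.) -/

import Mathlib

universe u v w

open CategoryTheory

/-- `V` is a (commutative unital) quantale: the tensor distributes over suprema. -/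
def QuantaleLaw (V : Type u) [CompleteLattice V] [CommMonoid V] : Prop :=
  ∀ (u : V) (s : Set V), u * sSup s = ⨆ v ∈ s, u * v

/-- Internal hom of the quantale: `hom u w = ⨆ {v | u ⊗ v ≤ w}`. -/
def qhom {V : Type u} [CompleteLattice V] [CommMonoid V] (u w : V) : V :=
  sSup {v | u * v ≤ w}

/-- `a` is a `V`-category structure on `X`. -/
def IsVCat {V : Type u} [CompleteLattice V] [CommMonoid V] {X : Type v}
    (a : X → X → V) : Prop :=
  (∀ x, (1 : V) ≤ a x x) ∧ ∀ x y z, a x y * a y z ≤ a x z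

/-- `f` is a `V`-functor from `(X,a)` to `(Y,b)`. -/
def IsVFunctor {V : Type u} [CompleteLattice V] {X : Type v} {Y : Type w}
    (a : X → X → V) (b : Y → Y → V) (f : X → Y) : Prop :=
  ∀ x y, a x y ≤ b (f x) (f y)

/-- `f` is an initial `V`-functor from `(X,a)` to `(Y,b)`. -/
def IsInitialVFunctor {V : Type u} {X : Type v} {Y : Type w}
    (a : X → X → V) (b : Y → Y → V) (f : X → Y) : Prop :=
  ∀ x y, a x y = b (f x) (f y)

/-- The `V`-category structure of the power `V^κ`. -/
def powStr {V : Type u} [CompleteLattice V] [CommMonoid V] (κ : Type v)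
    (p q : κ → V) : V :=
  ⨅ i, qhom (p i) (q i)

/-- The graph of a function, as a `V`-relation: `k` on the graph, `⊥` elsewhere. -/
def fnGraph {V : Type u} [CompleteLattice V] [CommMonoid V] {X : Type v} {Y : Type w}
    (f : X → Y) : X → Y → V :=
  fun x y => ⨆ _ : f x = y, (1 : V)

/-- A lifting of a `Set`-functor `F` to `V`-Cat. -/
structure Lifting (V : Type u) [CompleteLattice V] [CommMonoid V]
    (F : Type u ⥤ Type u) where
  str : ∀ {X : Type u}, (X → X → V) → F.obj X → F.obj X → V
  isVCat : ∀ {X : Type u} (a : X → X → V), IsVCat a → IsVCat (str a)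
  map : ∀ {X Y : Type u} (a : X → X → V) (b : Y → Y → V) (f : X → Y),
    IsVCat a → IsVCat b → IsVFunctor a b f →
    IsVFunctor (str a) (str b) ⇑(F.map (TypeCat.ofHom f))

/-- A `κ`-ary `V`-valued predicate lifting for a `Set`-functor `F`. -/
structure PredLifting (V : Type u) [CompleteLattice V] [CommMonoid V]
    (F : Type u ⥤ Type u) (κ : Type u) where
  app : ∀ {X : Type u}, (X → κ → V) → F.obj X → V
  natural : ∀ {X Y : Type u} (f : X → Y) (p : Y → κ → V) (t : F.obj X),
    app (fun x => p (f x)) t = app p (F.map (TypeCat.ofHom f) t)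

/-- A predicate lifting is monotone if it preserves the pointwise order of predicates. -/
def PredLifting.Mono {V : Type u} [CompleteLattice V] [CommMonoid V]
    {F : Type u ⥤ Type u} {κ : Type u} (lam : PredLifting V F κ) : Prop :=
  ∀ (X : Type u) (p q : X → κ → V), (∀ x i, p x i ≤ q x i) →
    ∀ t, lam.app p t ≤ lam.app q t

/-- A predicate lifting is compatible with a lifting `L` if it lifts `V`-functorial
predicates to `V`-functorial predicates. -/
def Compatible {V : Type u} [CompleteLattice V] [CommMonoid V] {F : Type u ⥤ Type u}
    (L : Lifting V F) {κ : Type u} (lam : PredLifting V F κ) : Prop :=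
  ∀ (X : Type u) (a : X → X → V), IsVCat a → ∀ f : X → κ → V,
    IsVFunctor a (powStr κ) f → IsVFunctor (L.str a) qhom (lam.app f)

/-- The Kantorovich `V`-category structure on `F.obj X` induced by a family of
predicate liftings. -/
noncomputable def kantStr {V : Type u} [CompleteLattice V] [CommMonoid V]
    {F : Type u ⥤ Type u} {ι : Type v} {κ : ι → Type u}
    (Λ : ∀ l, PredLifting V F (κ l)) {X : Type u} (a : X → X → V)
    (t s : F.obj X) : V :=
  ⨅ l, ⨅ f : {f : X → κ l → V // IsVFunctor a (powStr (κ l)) f},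
    qhom ((Λ l).app f.1 t) ((Λ l).app f.1 s)

/-- A generalized predicate lifting for `(F, L)` with parameter `V`-category `(A, α)`. -/
structure GenPredLifting (V : Type u) [CompleteLattice V] [CommMonoid V]
    (F : Type u ⥤ Type u) (L : Lifting V F) (A : Type u) (α : A → A → V) where
  app : ∀ {Z : Type u}, (Z → Z → V) → (Z → A) → F.obj Z → V
  isVFunctor : ∀ {Z : Type u} (c : Z → Z → V), IsVCat c → ∀ f : Z → A,
    IsVFunctor c α f → IsVFunctor (L.str c) qhom (app c f)
  natural : ∀ {Z Z' : Type u} (c : Z → Z → V) (c' : Z' → Z' → V),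
    IsVCat c → IsVCat c' → ∀ (u : Z → Z'), IsVFunctor c c' u →
    ∀ (g : Z' → A), IsVFunctor c' α g →
    ∀ t : F.obj Z, app c (fun z => g (u z)) t = app c' g (F.map (TypeCat.ofHom u) t)

/-- A lax extension of a `Set`-functor `F` to `V`-Rel. -/
structure LaxExt (V : Type u) [CompleteLattice V] [CommMonoid V]
    (F : Type u ⥤ Type u) where
  ext : ∀ {X Y : Type u}, (X → Y → V) → F.obj X → F.obj Y → V
  mono : ∀ {X Y : Type u} (r r' : X → Y → V), (∀ x y, r x y ≤ r' x y) →
    ∀ t s, ext r t s ≤ ext r' t s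
  comp : ∀ {X Y Z : Type u} (r : X → Y → V) (s : Y → Z → V)
    (t : F.obj X) (w : F.obj Z),
    (⨆ u : F.obj Y, ext r t u * ext s u w) ≤
      ext (fun x z => ⨆ y, r x y * s y z) t w
  lax_map : ∀ {X Y : Type u} (f : X → Y) (t : F.obj X),
    (1 : V) ≤ ext (fnGraph f) t (F.map (TypeCat.ofHom f) t)
  lax_map_op : ∀ {X Y : Type u} (f : X → Y) (t : F.obj X),
    (1 : V) ≤ ext (fun y x => fnGraph f x y) (F.map (TypeCat.ofHom f) t) t

/-!
The collage of `r : X → Y → V` is the `V`-category on `X ⊕ Y` that is discrete on each summand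
and is `r` from `X` to `Y`. Composing with the graph of a function `f` and with its converse
shows that a lax extension commutes with restriction along `f`:
`E r (F f t) s = E (r ∘ f) t s`, and likewise in the second argument. Hence `E r t s` is the
value of `E` at the collage on `F inl t` and `F inr s`, where the hypothesis applies.
-/

theorem QuantaleLaw.isQuantale {V : Type u} [CompleteLattice V] [CommMonoid V]
    (hV : QuantaleLaw V) : IsQuantale V where
  mul_sSup_distrib := hV
  sSup_mul_distrib s y := by simpa only [mul_comm _ y] using hV y s

section Quantale

variable {V : Type u} [CompleteLattice V] [CommMonoid V] [IsQuantale V]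

theorem fnGraph_mul {X : Type v} {Y : Type w} (f : X → Y) (x : X) (y : Y) (c : V) :
    fnGraph f x y * c = ⨆ _ : f x = y, c := by
  by_cases hxy : f x = y <;> simp [fnGraph, hxy]

theorem mul_fnGraph {X : Type v} {Y : Type w} (f : X → Y) (x : X) (y : Y) (c : V) :
    c * fnGraph f x y = ⨆ _ : f x = y, c := by
  rw [mul_comm, fnGraph_mul]

def collage {X Y : Type v} (r : X → Y → V) : X ⊕ Y → X ⊕ Y → V
  | .inl x, .inl x' => fnGraph id x x'
  | .inl x, .inr y => r x y
  | .inr _, .inl _ => ⊥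
  | .inr y, .inr y' => fnGraph id y y'

theorem collage_isVCat {X Y : Type v} (r : X → Y → V) : IsVCat (collage r) := by
  constructor
  · rintro (x | y) <;> exact le_iSup_of_le rfl le_rfl
  · rintro (x | y) (x' | y') (x'' | y'') <;>
      simp [collage, fnGraph_mul, mul_fnGraph] <;> rintro rfl <;> rfl

end Quantale

namespace LaxExt

variable {V : Type u} [CompleteLattice V] [CommMonoid V] {F : Type u ⥤ Type u}
  (E : LaxExt V F) {X Y Z : Type u}

theorem mul_le_ext_comp (r : X → Y → V) (s : Y → Z → V) (t : F.obj X) (u : F.obj Y)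
    (w : F.obj Z) : E.ext r t u * E.ext s u w ≤ E.ext (fun x z => ⨆ y, r x y * s y z) t w :=
  (le_iSup (fun u => E.ext r t u * E.ext s u w) u).trans (E.comp r s t w)

variable [IsQuantale V]

theorem ext_map_left (f : X → Y) (r : Y → Z → V) (t : F.obj X) (w : F.obj Z) :
    E.ext r (F.map (TypeCat.ofHom f) t) w = E.ext (fun x z => r (f x) z) t w := by
  apply le_antisymm
  · calc E.ext r (F.map (TypeCat.ofHom f) t) w
        ≤ E.ext (fnGraph f) t (F.map (TypeCat.ofHom f) t) *
            E.ext r (F.map (TypeCat.ofHom f) t) w :=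
          le_mul_of_one_le_left' (E.lax_map f t)
      _ ≤ _ := E.mul_le_ext_comp _ _ _ _ _
      _ = _ := by simp only [fnGraph_mul, iSup_iSup_eq_right]
  · calc E.ext (fun x z => r (f x) z) t w
        ≤ E.ext (fun y x => fnGraph f x y) (F.map (TypeCat.ofHom f) t) t *
            E.ext (fun x z => r (f x) z) t w :=
          le_mul_of_one_le_left' (E.lax_map_op f t)
      _ ≤ _ := E.mul_le_ext_comp _ _ _ _ _
      _ ≤ _ := E.mono _ _ (fun y z => by
          simp only [fnGraph_mul]
          exact iSup₂_le fun x hx => hx ▸ le_rfl) _ _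

theorem ext_map_right (f : Y → Z) (r : X → Z → V) (t : F.obj X) (s : F.obj Y) :
    E.ext r t (F.map (TypeCat.ofHom f) s) = E.ext (fun x y => r x (f y)) t s := by
  apply le_antisymm
  · calc E.ext r t (F.map (TypeCat.ofHom f) s)
        ≤ E.ext r t (F.map (TypeCat.ofHom f) s) *
            E.ext (fun z y => fnGraph f y z) (F.map (TypeCat.ofHom f) s) s :=
          le_mul_of_one_le_right' (E.lax_map_op f s)
      _ ≤ _ := E.mul_le_ext_comp _ _ _ _ _
      _ = _ := by simp only [mul_fnGraph, iSup_iSup_eq_right]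
  · calc E.ext (fun x y => r x (f y)) t s
        ≤ E.ext (fun x y => r x (f y)) t s * E.ext (fnGraph f) s (F.map (TypeCat.ofHom f) s) :=
          le_mul_of_one_le_right' (E.lax_map f s)
      _ ≤ _ := E.mul_le_ext_comp _ _ _ _ _
      _ ≤ _ := E.mono _ _ (fun x z => by
          simp only [mul_fnGraph]
          exact iSup₂_le fun y hy => hy ▸ le_rfl) _ _

theorem ext_eq_ext_collage (r : X → Y → V) (t : F.obj X) (s : F.obj Y) :
    E.ext r t s = E.ext (collage r) (F.map (TypeCat.ofHom Sum.inl) t)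
      (F.map (TypeCat.ofHom Sum.inr) s) := by
  rw [ext_map_left, ext_map_right]
  rfl

end LaxExt

/-- the assignment of induced liftings to lax extensions is
order-reflecting. -/
theorem stmt_12 {V : Type u} [CompleteLattice V] [CommMonoid V] (hV : QuantaleLaw V)
    {F : Type u ⥤ Type u} (E E' : LaxExt V F)
    (h : ∀ (X : Type u) (a : X → X → V), IsVCat a →
      ∀ t s : F.obj X, E.ext a t s ≤ E'.ext a t s)
    {X Y : Type u} (r : X → Y → V) (t : F.obj X) (s : F.obj Y) :
    E.ext r t s ≤ E'.ext r t s := by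
  have := hV.isQuantale
  rw [E.ext_eq_ext_collage, E'.ext_eq_ext_collage]
  exact h _ _ (collage_isVCat r) _ _
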